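/- Let 𝕃 be a quadratic space over ℚ_p and suppose Λ, Λ′ are vertex lattices in 𝕃 (lattices with pΛ ⊆ Λ^∨ ⊆ Λ). Then there exists a finite chain Λ = Λ₀, Λ₁, …, Λ_n = Λ′ of vertex lattices such that for each i, either Λ_i ⊆ Λ_{i+1} or Λ_i ⊇ Λ_{i+1}. -/

import Mathlib

/-- A vertex lattice in a quadratic space `𝕃` over `ℚ_p` with bilinear form
`B`: a full `ℤ_p`-lattice `Λ` with `pΛ ⊆ Λ^∨ ⊆ Λ`, where
`Λ^∨ = {x | ∀ y ∈ Λ, ‖B x y‖ ≤ 1}`. -/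
def IsVertexLattice (p : ℕ) [Fact (Nat.Prime p)] {𝕃 : Type*} [AddCommGroup 𝕃]
    [Module ℚ_[p] 𝕃] [Module ℤ_[p] 𝕃] [IsScalarTower ℤ_[p] ℚ_[p] 𝕃]
    (B : 𝕃 → 𝕃 → ℚ_[p]) (Λ : Submodule ℤ_[p] 𝕃) : Prop :=
  Λ.FG ∧ Submodule.span ℚ_[p] (Λ : Set 𝕃) = ⊤ ∧
    (∀ x : 𝕃, (∀ y ∈ Λ, ‖B x y‖ ≤ 1) → x ∈ Λ) ∧
    (∀ x ∈ Λ, ∀ y ∈ Λ, ‖B ((p : ℚ_[p]) • x) y‖ ≤ 1)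

/-!
Work over a discrete valuation ring `R` with uniformizer `ϖ` and fraction field `K`. Given vertex
lattices `Λ` and `Λ'` with `Λ' ⊈ Λ`, choose `x ∈ Λ' \ Λ` with `ϖx ∈ Λ`. Then `L = Λ^∨ + Λ ∩ Λ'` is
a vertex lattice inside `Λ`: by double duality `L^∨ = Λ ∩ (Λ^∨ + Λ'^∨)`, which the modular law
places inside `L`. Adjoining `x` gives a vertex lattice `M = L + Rx`, and `M ∩ Λ'` strictly
contains `Λ ∩ Λ'`. So `Λ ⊇ L ⊆ M` followed by induction on `Λ ∩ Λ'`, a submodule of the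
Noetherian module `Λ'`, connects `Λ` to `Λ'`.
-/

open LinearMap (BilinForm)
open Submodule

theorem Relation.ReflTransGen.exists_fin_chain {α : Type*} {r : α → α → Prop} {a b : α}
    (h : Relation.ReflTransGen r a b) :
    ∃ (n : ℕ) (c : Fin (n + 1) → α), c 0 = a ∧ c (Fin.last n) = b ∧
      ∀ i : Fin n, r (c i.castSucc) (c i.succ) := by
  induction h using Relation.ReflTransGen.head_induction_on with
  | refl => exact ⟨0, fun _ ↦ b, rfl, rfl, Fin.elim0⟩
  | head hac _ ih =>
    obtain ⟨n, c, rfl, rfl, hc⟩ := ih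
    exact ⟨n + 1, Fin.cons _ c, rfl, rfl, Fin.cases hac hc⟩

namespace Submodule

variable {R K V : Type*} [CommRing R] [IsDomain R] [Field K] [Algebra R K] [IsFractionRing R K]
  [AddCommGroup V] [Module K V] [Module R V] [IsScalarTower R K V]
  {N : Submodule R V}

lemma exists_smul_mem_of_span_eq_top (hN : span K (N : Set V) = ⊤) (z : V) :
    ∃ r : R, r ≠ 0 ∧ r • z ∈ N := by
  have hz : z ∈ span K (N : Set V) := hN ▸ mem_top
  induction hz using span_induction with
  | mem w hw => exact ⟨1, one_ne_zero, by simpa using hw⟩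
  | zero => exact ⟨1, one_ne_zero, by simp⟩
  | add u v _ _ hu hv =>
    obtain ⟨r, hr, hru⟩ := hu
    obtain ⟨s, hs, hsv⟩ := hv
    refine ⟨r * s, mul_ne_zero hr hs, ?_⟩
    rw [smul_add, mul_smul, mul_smul, smul_comm r s u]
    exact add_mem (N.smul_mem s hru) (N.smul_mem r hsv)
  | smul a u _ hu =>
    obtain ⟨r, hr, hru⟩ := hu
    obtain ⟨t, c, hc⟩ := IsLocalization.exists_integer_multiple (nonZeroDivisors R) a
    refine ⟨r * t, mul_ne_zero hr (nonZeroDivisors.coe_ne_zero t), ?_⟩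
    rw [mul_smul, ← smul_assoc (t : R), ← hc, algebraMap_smul, smul_comm]
    exact N.smul_mem c hru

variable [IsDiscreteValuationRing R] {ϖ : R}

lemma exists_pow_smul_notMem_and_pow_succ_smul_mem_of_span_eq_top
    (hN : span K (N : Set V) = ⊤) (hϖ : Irreducible ϖ) {z : V} (hz : z ∉ N) :
    ∃ n : ℕ, ϖ ^ n • z ∉ N ∧ ϖ ^ (n + 1) • z ∈ N := by
  obtain ⟨r, hr, hrz⟩ := exists_smul_mem_of_span_eq_top hN z
  obtain ⟨n, u, rfl⟩ := IsDiscreteValuationRing.eq_unit_mul_pow_irreducible hr hϖ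
  rw [mul_smul, ← Units.smul_def, smul_mem_iff'] at hrz
  exact Nat.exists_not_and_succ_of_not_zero_of_exists (p := fun k ↦ ϖ ^ k • z ∈ N)
    (by simpa using hz) ⟨n, hrz⟩

end Submodule

namespace Module.Basis

variable {R K V : Type*} [CommRing R] [Field K] [Algebra R K] [IsFractionRing R K]
  [AddCommGroup V] [Module K V] [Module R V] [IsScalarTower R K V]

lemma span_extendOfIsLattice {κ : Type*} {N : Submodule R V} [N.IsLattice K]
    (b : Basis κ R N) : span R (Set.range (b.extendOfIsLattice K)) = N := by
  rw [show (b.extendOfIsLattice K : κ → V) = N.subtype ∘ b by ext; simp, Set.range_comp,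
    ← map_span, b.span_eq, Submodule.map_top, range_subtype]

end Module.Basis

namespace LinearMap.BilinForm

variable {R K V : Type*} [CommRing R] [Field K] [Algebra R K]
  [AddCommGroup V] [Module K V] [Module R V] [IsScalarTower R K V]
  (B : BilinForm K V)

lemma dualSubmodule_antitone : Antitone (B.dualSubmodule (R := R)) :=
  fun _ _ h _ hx y hy ↦ hx y (h hy)

lemma dualSubmodule_sup (N₁ N₂ : Submodule R V) :
    B.dualSubmodule (N₁ ⊔ N₂) = B.dualSubmodule N₁ ⊓ B.dualSubmodule N₂ := by
  refine le_antisymm (le_inf (B.dualSubmodule_antitone le_sup_left)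
    (B.dualSubmodule_antitone le_sup_right)) ?_
  rintro x ⟨hx₁, hx₂⟩ y hy
  obtain ⟨y₁, hy₁, y₂, hy₂, rfl⟩ := mem_sup.mp hy
  rw [map_add]
  exact add_mem (hx₁ y₁ hy₁) (hx₂ y₂ hy₂)

variable {B}

lemma IsSymm.le_dualSubmodule_comm (hB : B.IsSymm) {N₁ N₂ : Submodule R V} :
    N₁ ≤ B.dualSubmodule N₂ ↔ N₂ ≤ B.dualSubmodule N₁ := by
  rw [← le_flip_dualSubmodule, show B.flip = B from isSymm_iff_flip.mp hB]

lemma IsSymm.le_dualSubmodule_dualSubmodule (hB : B.IsSymm) (N : Submodule R V) :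
    N ≤ B.dualSubmodule (B.dualSubmodule N) :=
  hB.le_dualSubmodule_comm.mp le_rfl

lemma IsSymm.sup_le_dualSubmodule_sup (hB : B.IsSymm) {N₁ N₂ : Submodule R V}
    (h₁ : N₁ ≤ B.dualSubmodule N₁) (h₂₁ : N₂ ≤ B.dualSubmodule N₁)
    (h₂ : N₂ ≤ B.dualSubmodule N₂) : N₁ ⊔ N₂ ≤ B.dualSubmodule (N₁ ⊔ N₂) := by
  rw [dualSubmodule_sup]
  exact sup_le (le_inf h₁ (hB.le_dualSubmodule_comm.mp h₂₁)) (le_inf h₂₁ h₂)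

lemma mem_dualSubmodule_smul_iff {r : R} {N : Submodule R V} {x : V} :
    x ∈ (r • B).dualSubmodule N ↔ r • x ∈ B.dualSubmodule N := by
  simp [mem_dualSubmodule]

section Lattice

variable [IsDomain R] [IsPrincipalIdealRing R] [IsFractionRing R K]

lemma isLattice_dualSubmodule (hB : B.Nondegenerate) (N : Submodule R V) [N.IsLattice K] :
    (B.dualSubmodule N).IsLattice K := by
  classical
  let b := (Module.Free.chooseBasis R N).extendOfIsLattice K
  have := b.finiteDimensional_of_finite
  rw [← (Module.Free.chooseBasis R N).span_extendOfIsLattice, B.dualSubmodule_span_of_basis hB]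
  exact ⟨fg_span (Set.finite_range _), by rw [span_span_of_tower, Module.Basis.span_eq]⟩

lemma dualSubmodule_dualSubmodule (hB : B.Nondegenerate) (hB' : B.IsSymm) (N : Submodule R V)
    [N.IsLattice K] :
    B.dualSubmodule (B.dualSubmodule N) = N := by
  rw [← (Module.Free.chooseBasis R N).span_extendOfIsLattice]
  exact B.dualSubmodule_dualSubmodule_of_basis hB hB' _

lemma dualSubmodule_inf (hB : B.Nondegenerate) (hB' : B.IsSymm) (N₁ N₂ : Submodule R V)
    [N₁.IsLattice K] [N₂.IsLattice K] :
    B.dualSubmodule (N₁ ⊓ N₂) = B.dualSubmodule N₁ ⊔ B.dualSubmodule N₂ := by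
  have := isLattice_dualSubmodule hB N₁
  have := isLattice_dualSubmodule hB N₂
  rw [← dualSubmodule_dualSubmodule hB hB' (_ ⊔ _), dualSubmodule_sup,
    dualSubmodule_dualSubmodule hB hB', dualSubmodule_dualSubmodule hB hB']

end Lattice

-- `ϖΛ ⊆ Λ^∨` is phrased as `Λ ⊆ (ϖB)^∨(Λ)`, so that it is checked on `L ⊔ N` pairwise.
structure IsVertexLattice (B : BilinForm K V) (ϖ : R) (Λ : Submodule R V) : Prop where
  isLattice : Λ.IsLattice K
  dualSubmodule_le : B.dualSubmodule Λ ≤ Λ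
  le_dualSubmodule_smul : Λ ≤ (ϖ • B).dualSubmodule Λ

variable {ϖ : R} {Λ Λ' L N : Submodule R V}

lemma IsVertexLattice.sup (hB' : B.IsSymm) (hL : B.IsVertexLattice ϖ L) (hN : N.FG)
    (hNL : N ≤ (ϖ • B).dualSubmodule L) (hNN : N ≤ (ϖ • B).dualSubmodule N) :
    B.IsVertexLattice ϖ (L ⊔ N) where
  isLattice :=
    have := hL.isLattice
    IsLattice.of_le_of_isLattice_of_fg K le_sup_left (hL.isLattice.fg.sup hN)
  dualSubmodule_le :=
    (B.dualSubmodule_antitone le_sup_left).trans (hL.dualSubmodule_le.trans le_sup_left)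
  le_dualSubmodule_smul :=
    (hB'.smul ϖ).sup_le_dualSubmodule_sup hL.le_dualSubmodule_smul hNL hNN

section VertexLattice

variable [IsDomain R] [IsPrincipalIdealRing R] [IsFractionRing R K]

lemma IsVertexLattice.of_le (hB : B.Nondegenerate) (hΛ : B.IsVertexLattice ϖ Λ)
    (hL₁ : B.dualSubmodule Λ ≤ L) (hL₂ : L ≤ Λ) (hL : B.dualSubmodule L ≤ L) :
    B.IsVertexLattice ϖ L where
  isLattice :=
    have := hΛ.isLattice
    have := isLattice_dualSubmodule hB Λ
    IsLattice.of_le_of_isLattice_of_fg K hL₁ (hΛ.isLattice.fg.of_le hL₂)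
  dualSubmodule_le := hL
  le_dualSubmodule_smul :=
    hL₂.trans (hΛ.le_dualSubmodule_smul.trans (dualSubmodule_antitone _ hL₂))

lemma IsVertexLattice.dualSubmodule_sup_inf (hB : B.Nondegenerate) (hB' : B.IsSymm)
    (hΛ : B.IsVertexLattice ϖ Λ) (hΛ' : B.IsVertexLattice ϖ Λ') :
    B.IsVertexLattice ϖ (B.dualSubmodule Λ ⊔ Λ ⊓ Λ') := by
  refine hΛ.of_le hB le_sup_left (sup_le hΛ.dualSubmodule_le inf_le_left) ?_
  have := hΛ.isLattice
  have := hΛ'.isLattice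
  rw [dualSubmodule_sup, dualSubmodule_dualSubmodule hB hB', dualSubmodule_inf hB hB',
    inf_comm, sup_inf_assoc_of_le _ hΛ.dualSubmodule_le]
  exact sup_le_sup_left (le_inf inf_le_right (inf_le_left.trans hΛ'.dualSubmodule_le)) _

lemma IsVertexLattice.sup_span_singleton (hB : B.Nondegenerate) (hB' : B.IsSymm)
    (hΛ : B.IsVertexLattice ϖ Λ) (hΛ' : B.IsVertexLattice ϖ Λ') {x : V} (hx : x ∈ Λ')
    (hϖx : ϖ • x ∈ Λ) : B.IsVertexLattice ϖ ((B.dualSubmodule Λ ⊔ Λ ⊓ Λ') ⊔ span R {x}) := by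
  have hxΛ' := (span_singleton_le_iff_mem x Λ').mpr hx
  refine (hΛ.dualSubmodule_sup_inf hB hB' hΛ').sup hB' (fg_span_singleton x) ?_
    (hxΛ'.trans (hΛ'.le_dualSubmodule_smul.trans (dualSubmodule_antitone _ hxΛ')))
  rw [span_singleton_le_iff_mem, dualSubmodule_sup]
  exact ⟨mem_dualSubmodule_smul_iff.mpr (hB'.le_dualSubmodule_dualSubmodule Λ hϖx),
    dualSubmodule_antitone _ inf_le_right (hΛ'.le_dualSubmodule_smul hx)⟩

end VertexLattice

lemma IsVertexLattice.reflTransGen [IsDomain R] [IsDiscreteValuationRing R] [IsFractionRing R K]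
    (hB : B.Nondegenerate) (hB' : B.IsSymm) (hϖ : Irreducible ϖ) (hΛ : B.IsVertexLattice ϖ Λ)
    (hΛ' : B.IsVertexLattice ϖ Λ') :
    Relation.ReflTransGen (fun Λ₁ Λ₂ : {Λ // B.IsVertexLattice ϖ Λ} ↦ Λ₁.1 ≤ Λ₂.1 ∨ Λ₂.1 ≤ Λ₁.1)
      ⟨Λ, hΛ⟩ ⟨Λ', hΛ'⟩ := by
  have := hΛ'.isLattice
  -- induction on `Λ ∩ Λ'`, seen inside the Noetherian module `Λ'`
  induction hN : Λ.comap Λ'.subtype using WellFoundedGT.induction generalizing Λ with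
  | _ N ih =>
  subst hN
  by_cases hle : Λ' ≤ Λ
  · exact .single (.inr hle)
  obtain ⟨z, hzΛ', hzΛ⟩ := SetLike.not_le_iff_exists.mp hle
  obtain ⟨n, hxΛ, hϖx⟩ :=
    exists_pow_smul_notMem_and_pow_succ_smul_mem_of_span_eq_top hΛ.isLattice.span_eq_top hϖ hzΛ
  set x := ϖ ^ n • z
  have hxΛ' : x ∈ Λ' := Λ'.smul_mem _ hzΛ'
  rw [pow_succ', mul_smul] at hϖx
  set L := B.dualSubmodule Λ ⊔ Λ ⊓ Λ'
  set M := L ⊔ span R {x}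
  have hlt : Λ.comap Λ'.subtype < M.comap Λ'.subtype :=
    SetLike.lt_iff_le_and_exists.mpr ⟨fun y hy ↦ mem_sup_left (mem_sup_right (mem_inf.mpr
      ⟨hy, y.2⟩)), ⟨x, hxΛ'⟩, mem_sup_right (mem_span_singleton_self x), hxΛ⟩
  have hM := hΛ.sup_span_singleton hB hB' hΛ' hxΛ' hϖx
  exact .head (b := ⟨L, hΛ.dualSubmodule_sup_inf hB hB' hΛ'⟩)
    (.inr (sup_le hΛ.dualSubmodule_le inf_le_left))
    (.head (b := ⟨M, hM⟩) (.inl le_sup_left) (ih _ hlt hM rfl))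

end LinearMap.BilinForm

lemma PadicInt.mem_one_submodule_iff {p : ℕ} [Fact p.Prime] {z : ℚ_[p]} :
    z ∈ (1 : Submodule ℤ_[p] ℚ_[p]) ↔ ‖z‖ ≤ 1 :=
  mem_one.trans ⟨fun ⟨y, hy⟩ ↦ hy ▸ y.2, fun h ↦ ⟨⟨z, h⟩, rfl⟩⟩

lemma isVertexLattice_iff {p : ℕ} [Fact p.Prime] {𝕃 : Type*} [AddCommGroup 𝕃] [Module ℚ_[p] 𝕃]
    [Module ℤ_[p] 𝕃] [IsScalarTower ℤ_[p] ℚ_[p] 𝕃] (B : BilinForm ℚ_[p] 𝕃)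
    (Λ : Submodule ℤ_[p] 𝕃) :
    IsVertexLattice p (fun x y ↦ B x y) Λ ↔ B.IsVertexLattice (p : ℤ_[p]) Λ := by
  have hp : ∀ x y, ((p : ℤ_[p]) • B) x y = B ((p : ℚ_[p]) • x) y := by
    simp [Nat.cast_smul_eq_nsmul]
  constructor
  · rintro ⟨hfg, hspan, hdual, hint⟩
    refine ⟨⟨hfg, hspan⟩, fun x hx ↦ hdual x fun y hy ↦ ?_, fun x hx y hy ↦ ?_⟩
    · exact PadicInt.mem_one_submodule_iff.mp (hx y hy)
    · exact PadicInt.mem_one_submodule_iff.mpr (hp x y ▸ hint x hx y hy)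
  · rintro ⟨⟨hfg, hspan⟩, hdual, hint⟩
    refine ⟨hfg, hspan, fun x hx ↦ hdual fun y hy ↦ ?_, fun x hx y hy ↦ ?_⟩
    · exact PadicInt.mem_one_submodule_iff.mpr (hx y hy)
    · simpa only [hp, PadicInt.mem_one_submodule_iff] using hint hx y hy

theorem vertexLattices_chain_connected_general
    (p : ℕ) [Fact (Nat.Prime p)]
    (𝕃 : Type*) [AddCommGroup 𝕃] [Module ℚ_[p] 𝕃] [Module ℤ_[p] 𝕃]
    [IsScalarTower ℤ_[p] ℚ_[p] 𝕃]
    (B : 𝕃 → 𝕃 → ℚ_[p])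
    (haddl : ∀ x x' y : 𝕃, B (x + x') y = B x y + B x' y)
    (hsmull : ∀ (a : ℚ_[p]) (x y : 𝕃), B (a • x) y = a * B x y)
    (hsymm : ∀ x y : 𝕃, B x y = B y x)
    (hnd : ∀ x : 𝕃, (∀ y : 𝕃, B x y = 0) → x = 0)
    (Λ Λ' : Submodule ℤ_[p] 𝕃)
    (hΛ : IsVertexLattice p B Λ) (hΛ' : IsVertexLattice p B Λ') :
    ∃ (n : ℕ) (c : Fin (n + 1) → Submodule ℤ_[p] 𝕃),
      c 0 = Λ ∧ c (Fin.last n) = Λ' ∧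
      (∀ i, IsVertexLattice p B (c i)) ∧
      (∀ i : Fin n, c i.castSucc ≤ c i.succ ∨ c i.succ ≤ c i.castSucc) := by
  let Bl : BilinForm ℚ_[p] 𝕃 := LinearMap.mk₂ ℚ_[p] B haddl (fun a x y ↦ hsmull a x y)
    (fun x y y' ↦ by rw [hsymm, haddl, hsymm y, hsymm y'])
    (fun a x y ↦ by rw [hsymm, hsmull, hsymm, smul_eq_mul])
  have hBl_symm : Bl.IsSymm := ⟨hsymm⟩
  have hBl_nd : Bl.Nondegenerate :=
    ⟨fun x hx ↦ hnd x hx, fun y hy ↦ hnd y fun x ↦ (hsymm y x).trans (hy x)⟩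
  obtain ⟨n, c, hc₀, hcₙ, hc⟩ := (((isVertexLattice_iff Bl Λ).mp hΛ).reflTransGen hBl_nd hBl_symm
    PadicInt.irreducible_p ((isVertexLattice_iff Bl Λ').mp hΛ')).exists_fin_chain
  exact ⟨n, fun i ↦ (c i).1, congrArg Subtype.val hc₀, congrArg Subtype.val hcₙ,
    fun i ↦ (isVertexLattice_iff Bl _).mpr (c i).2, hc⟩

/-- any two vertex lattices in the 6-dimensional quadratic space
`𝕃` over `ℚ_p` are connected by a chain of vertex lattices in which consecutive
members are comparable by inclusion. -/
theorem vertexLattices_chain_connected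
    (p : ℕ) [Fact (Nat.Prime p)] (hp : Odd p)
    (𝕃 : Type*) [AddCommGroup 𝕃] [Module ℚ_[p] 𝕃] [Module ℤ_[p] 𝕃]
    [IsScalarTower ℤ_[p] ℚ_[p] 𝕃]
    (hdim : Module.finrank ℚ_[p] 𝕃 = 6)
    (B : 𝕃 → 𝕃 → ℚ_[p])
    (haddl : ∀ x x' y : 𝕃, B (x + x') y = B x y + B x' y)
    (hsmull : ∀ (a : ℚ_[p]) (x y : 𝕃), B (a • x) y = a * B x y)
    (hsymm : ∀ x y : 𝕃, B x y = B y x)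
    (hnd : ∀ x : 𝕃, (∀ y : 𝕃, B x y = 0) → x = 0)
    (Λ Λ' : Submodule ℤ_[p] 𝕃)
    (hΛ : IsVertexLattice p B Λ) (hΛ' : IsVertexLattice p B Λ') :
    ∃ (n : ℕ) (c : Fin (n + 1) → Submodule ℤ_[p] 𝕃),
      c 0 = Λ ∧ c (Fin.last n) = Λ' ∧
      (∀ i, IsVertexLattice p B (c i)) ∧
      (∀ i : Fin n, c i.castSucc ≤ c i.succ ∨ c i.succ ≤ c i.castSucc) :=
  vertexLattices_chain_connected_general p 𝕃 B haddl hsmull hsymm hnd Λ Λ' hΛ hΛ'
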